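/- Let G = (V,E) be a finite undirected graph with V partitioned into L and F, let S ⊆ L and u ∈ S. Then w^L(G[V\S]) ≤ w^L(G[(V\S) ∪ {u}]), i.e., revealing an additional leader node u to the common pool never decreases the minimum number of leader nodes covered in a maximum matching. -/

import Mathlib

variable {V : Type*} [Fintype V] [DecidableEq V]

/-- A matching of `G` all of whose edges lie inside the vertex set `W`
(i.e. a matching of the induced subgraph `G[W]`). -/
def IsMatchingOn (G : SimpleGraph V) (W : Set V) (M : Finset (Sym2 V)) : Prop :=
  (∀ e ∈ M, e ∈ G.edgeSet) ∧ (∀ e ∈ M, ∀ v ∈ e, v ∈ W) ∧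
  (M : Set (Sym2 V)).Pairwise fun e f => ∀ v, v ∈ e → v ∉ f

/-- Vertices covered by a set of edges. -/
def mcovered (M : Finset (Sym2 V)) : Set V := {v | ∃ e ∈ M, v ∈ e}

/-- `w(G[W])`: maximum cardinality of a matching of `G[W]`. -/
noncomputable def mmax (G : SimpleGraph V) (W : Set V) : ℕ :=
  sSup {n | ∃ M, IsMatchingOn G W M ∧ M.card = n}

/-- `w^L(G[W])`: minimum number of `L`-vertices covered over maximum matchings of `G[W]`. -/
noncomputable def mwL (G : SimpleGraph V) (L W : Set V) : ℕ :=
  sInf {k | ∃ M, IsMatchingOn G W M ∧ M.card = mmax G W ∧ (mcovered M ∩ L).ncard = k}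

/-!
Let `M` be a maximum matching of `G[W ∪ {u}]` covering the fewest leaders, and `N` a maximum
matching of `G[W]`, where `u ∉ W`. If `M` leaves `u` unmatched, it is a maximum matching of
`G[W]`. Otherwise follow the `M`/`N`-alternating path from `u`. If it ends with an `M`-edge it
augments `N`, so `w(G[W]) = |M| - 1` and `M` minus its edge at `u` is maximum in `G[W]`. If it
ends with an `N`-edge, switching `M` along it yields a matching of `G[W]` of size `|M|` that
covers the vertices of `M` except `u`, plus at most one new vertex. As `u ∈ L`, neither step
increases the number of covered leaders.
-/

theorem Set.ncard_inter_le_of_subset_insert {α : Type*} {A B L : Set α} {u z : α}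
    (hAB : A ⊆ insert z B) (huB : u ∈ B) (huL : u ∈ L) (huA : u ∉ A) (hB : B.Finite) :
    (A ∩ L).ncard ≤ (B ∩ L).ncard :=
  calc (A ∩ L).ncard ≤ (insert z ((B ∩ L) \ {u})).ncard := by
        refine Set.ncard_le_ncard (fun x ⟨hxA, hxL⟩ => ?_) ((hB.inter_of_left L).sdiff.insert z)
        rcases hAB hxA with rfl | hxB
        · exact Set.mem_insert x _
        · exact Set.mem_insert_of_mem z ⟨⟨hxB, hxL⟩, fun hxu => huA (hxu ▸ hxA)⟩
    _ ≤ ((B ∩ L) \ {u}).ncard + 1 := Set.ncard_insert_le z _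
    _ = (B ∩ L).ncard := Set.ncard_sdiff_singleton_add_one ⟨huB, huL⟩ (hB.inter_of_left L)

section Matchings

omit [Fintype V] [DecidableEq V]

variable {G : SimpleGraph V} {W W' : Set V} {M N : Finset (Sym2 V)} {v : V}

theorem mcovered_mono (h : M ⊆ N) : mcovered M ⊆ mcovered N :=
  fun _ ⟨e, he, hv⟩ => ⟨e, h he, hv⟩

namespace IsMatchingOn

theorem mono (h : IsMatchingOn G W M) (hW : W ⊆ W') : IsMatchingOn G W' M :=
  ⟨h.1, fun e he v hv => hW (h.2.1 e he v hv), h.2.2⟩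

theorem subset (h : IsMatchingOn G W M) (hNM : N ⊆ M) : IsMatchingOn G W N :=
  ⟨fun e he => h.1 e (hNM he), fun e he => h.2.1 e (hNM he),
    h.2.2.mono (Finset.coe_subset.mpr hNM)⟩

theorem mem_of_mem_mcovered (h : IsMatchingOn G W M) (hv : v ∈ mcovered M) : v ∈ W :=
  let ⟨e, he, hve⟩ := hv
  h.2.1 e he v hve

theorem notMem_mcovered (h : IsMatchingOn G W M) (hv : v ∉ W) : v ∉ mcovered M :=
  fun hvM => hv (h.mem_of_mem_mcovered hvM)

theorem diff_singleton (h : IsMatchingOn G W M) (hv : v ∉ mcovered M) :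
    IsMatchingOn G (W \ {v}) M :=
  ⟨h.1, fun e he x hx => ⟨h.2.1 e he x hx, fun hxv => hv ⟨e, he, hxv ▸ hx⟩⟩, h.2.2⟩

theorem exists_adj (h : IsMatchingOn G W M) (hv : v ∈ mcovered M) :
    ∃ w, s(v, w) ∈ M ∧ G.Adj v w := by
  obtain ⟨e, he, hve⟩ := hv
  obtain ⟨w, rfl⟩ := Sym2.mem_iff_exists.mp hve
  exact ⟨w, he, h.1 _ he⟩

end IsMatchingOn

end Matchings

section MatchingsInsertErase

omit [Fintype V]

variable {G : SimpleGraph V} {W : Set V} {M : Finset (Sym2 V)} {e : Sym2 V} {a b v : V}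

theorem mem_mcovered_erase (hv : v ∈ mcovered M) (hve : v ∉ e) : v ∈ mcovered (M.erase e) :=
  let ⟨f, hf, hvf⟩ := hv
  ⟨f, Finset.mem_erase.mpr ⟨fun hfe => hve (hfe ▸ hvf), hf⟩, hvf⟩

theorem mcovered_insert_mk :
    mcovered (insert s(a, b) M) = insert a (insert b (mcovered M)) := by
  ext x
  simp only [mcovered, Finset.mem_insert, exists_eq_or_imp, Sym2.mem_iff, Set.mem_insert_iff,
    Set.mem_ofPred_eq, or_assoc]

namespace IsMatchingOn

theorem notMem_mcovered_erase (h : IsMatchingOn G W M) (he : e ∈ M) (hv : v ∈ e) :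
    v ∉ mcovered (M.erase e) := by
  rintro ⟨f, hf, hvf⟩
  obtain ⟨hfe, hfM⟩ := Finset.mem_erase.mp hf
  exact h.2.2 hfM he hfe v hvf hv

theorem erase_mk (h : IsMatchingOn G W M) (hab : s(a, b) ∈ M) :
    IsMatchingOn G ((W \ {a}) \ {b}) (M.erase s(a, b)) :=
  ((h.subset (Finset.erase_subset _ _)).diff_singleton
    (h.notMem_mcovered_erase hab (Sym2.mem_mk_left a b))).diff_singleton
    (h.notMem_mcovered_erase hab (Sym2.mem_mk_right a b))

theorem insert_mk (h : IsMatchingOn G ((W \ {a}) \ {b}) M) (hab : G.Adj a b) (ha : a ∈ W)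
    (hb : b ∈ W) : IsMatchingOn G W (insert s(a, b) M) := by
  have hmem : ∀ f ∈ M, ∀ x ∈ f, (x ∈ W ∧ x ≠ a) ∧ x ≠ b := h.2.1
  have hfree : ∀ f ∈ M, ∀ x ∈ f, x ∉ s(a, b) := by
    intro f hf x hx hxab
    rcases Sym2.mem_iff.mp hxab with rfl | rfl
    exacts [(hmem f hf x hx).1.2 rfl, (hmem f hf x hx).2 rfl]
  refine ⟨?_, ?_, ?_⟩
  · exact Finset.forall_mem_insert _ _ _ |>.mpr ⟨hab, h.1⟩
  · refine Finset.forall_mem_insert _ _ _ |>.mpr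
      ⟨fun x hx => ?_, fun f hf x hx => (hmem f hf x hx).1.1⟩
    rcases Sym2.mem_iff.mp hx with rfl | rfl
    exacts [ha, hb]
  · rw [Finset.coe_insert, Set.pairwise_insert]
    exact ⟨h.2.2, fun f hf _ =>
      ⟨fun x hx hxf => hfree f hf x hxf hx, fun x hxf hx => hfree f hf x hxf hx⟩⟩

theorem card_insert_mk (h : IsMatchingOn G ((W \ {a}) \ {b}) M) :
    (insert s(a, b) M).card = M.card + 1 :=
  Finset.card_insert_of_notMem fun hab =>
    h.notMem_mcovered (by simp) ⟨_, hab, Sym2.mem_mk_left a b⟩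

theorem exists_augment_or_shift {N : Finset (Sym2 V)} {u : V} (hM : IsMatchingOn G W M)
    (hN : IsMatchingOn G W N) (huM : u ∈ mcovered M) (huN : u ∉ mcovered N) :
    (∃ P, IsMatchingOn G W P ∧ P.card = N.card + 1) ∨
      ∃ P z, IsMatchingOn G (W \ {u}) P ∧ P.card = M.card ∧
        mcovered P ⊆ insert z (mcovered M) := by
  induction N using Finset.strongInduction generalizing M W u with
  | H N ih =>
  obtain ⟨v, huvM, huv⟩ := hM.exists_adj huM
  have hvM : v ∈ mcovered M := ⟨_, huvM, Sym2.mem_mk_right u v⟩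
  have hu : u ∈ W := hM.mem_of_mem_mcovered huM
  have hv : v ∈ W := hM.mem_of_mem_mcovered hvM
  by_cases hvN : v ∈ mcovered N
  swap
  · have hN' := (hN.diff_singleton huN).diff_singleton hvN
    exact Or.inl ⟨_, hN'.insert_mk huv hu hv, hN'.card_insert_mk⟩
  obtain ⟨z, hvzN, hvz⟩ := hN.exists_adj hvN
  have hzu : z ≠ u := by
    rintro rfl
    exact huN ⟨_, hvzN, Sym2.mem_mk_right v z⟩
  have hz : z ∈ W \ {u} := ⟨hN.mem_of_mem_mcovered ⟨_, hvzN, Sym2.mem_mk_right v z⟩, hzu⟩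
  have hM₁ := hM.erase_mk huvM
  have hcov₁ : mcovered (M.erase s(u, v)) ⊆ mcovered M :=
    mcovered_mono (Finset.erase_subset _ _)
  -- Either the alternating path from `u` augments `N`, or it ends in a matching `Q`
  -- avoiding `u, v, z` to which the `N`-edge `s(v, z)` can be added.
  have key : (∃ P, IsMatchingOn G W P ∧ P.card = N.card + 1) ∨
      ∃ Q z', IsMatchingOn G (((W \ {u}) \ {v}) \ {z}) Q ∧ Q.card + 1 = M.card ∧
        insert z (mcovered Q) ⊆ insert z' (mcovered M) := by
    by_cases hzM : z ∈ mcovered M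
    · have hN₁ : IsMatchingOn G ((W \ {u}) \ {v}) (N.erase s(v, z)) :=
        ((hN.subset (Finset.erase_subset _ _)).diff_singleton
          fun h => huN (mcovered_mono (Finset.erase_subset _ _) h)).diff_singleton
          (hN.notMem_mcovered_erase hvzN (Sym2.mem_mk_left v z))
      have hzM₁ : z ∈ mcovered (M.erase s(u, v)) :=
        mem_mcovered_erase hzM (by rw [Sym2.mem_iff]; exact not_or.mpr ⟨hzu, hvz.ne'⟩)
      rcases ih _ (Finset.erase_ssubset hvzN) hM₁ hN₁ hzM₁
          (hN.notMem_mcovered_erase hvzN (Sym2.mem_mk_right v z)) with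
        ⟨P, hP, hPcard⟩ | ⟨P, z', hP, hPcard, hPcov⟩
      · refine Or.inl ⟨_, hP.insert_mk huv hu hv, ?_⟩
        rw [hP.card_insert_mk, hPcard, Finset.card_erase_add_one hvzN]
      · refine Or.inr ⟨P, z', hP, by rw [hPcard, Finset.card_erase_add_one huvM], ?_⟩
        exact Set.insert_subset (Set.mem_insert_of_mem _ hzM)
          (hPcov.trans (Set.insert_subset_insert hcov₁))
    · exact Or.inr ⟨_, z, hM₁.diff_singleton fun h => hzM (hcov₁ h),
        Finset.card_erase_add_one huvM, Set.insert_subset_insert hcov₁⟩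
  rcases key with hP | ⟨Q, z', hQ, hQcard, hQcov⟩
  · exact Or.inl hP
  · refine Or.inr ⟨_, z', hQ.insert_mk hvz ⟨hv, huv.ne'⟩ hz,
      by rw [hQ.card_insert_mk, hQcard], ?_⟩
    rw [mcovered_insert_mk]
    exact Set.insert_subset (Set.mem_insert_of_mem _ hvM) hQcov

end IsMatchingOn

end MatchingsInsertErase

section MaximumMatchings

omit [DecidableEq V]

variable {G : SimpleGraph V} {L W : Set V} {M : Finset (Sym2 V)}

theorem bddAbove_card_isMatchingOn (G : SimpleGraph V) (W : Set V) :
    BddAbove {n | ∃ M, IsMatchingOn G W M ∧ M.card = n} :=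
  ⟨Fintype.card (Sym2 V), fun _ ⟨M, _, hM⟩ => hM ▸ Finset.card_le_univ M⟩

theorem exists_card_eq_mmax (G : SimpleGraph V) (W : Set V) :
    ∃ M, IsMatchingOn G W M ∧ M.card = mmax G W :=
  Nat.sSup_mem (s := {n | ∃ M, IsMatchingOn G W M ∧ M.card = n})
    ⟨0, ∅, ⟨by simp, by simp, by simp⟩, Finset.card_empty⟩
    (bddAbove_card_isMatchingOn G W)

theorem IsMatchingOn.card_le_mmax (h : IsMatchingOn G W M) : M.card ≤ mmax G W :=
  le_csSup (bddAbove_card_isMatchingOn G W) ⟨M, h, rfl⟩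

theorem exists_ncard_eq_mwL (G : SimpleGraph V) (L W : Set V) :
    ∃ M, IsMatchingOn G W M ∧ M.card = mmax G W ∧ (mcovered M ∩ L).ncard = mwL G L W :=
  let ⟨M, hM, hcard⟩ := exists_card_eq_mmax G W
  Nat.sInf_mem
    (s := {k | ∃ M, IsMatchingOn G W M ∧ M.card = mmax G W ∧ (mcovered M ∩ L).ncard = k})
    ⟨_, M, hM, hcard, rfl⟩

theorem IsMatchingOn.mwL_le (h : IsMatchingOn G W M) (hcard : mmax G W ≤ M.card) :
    mwL G L W ≤ (mcovered M ∩ L).ncard :=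
  Nat.sInf_le ⟨M, h, le_antisymm h.card_le_mmax hcard, rfl⟩

end MaximumMatchings

theorem stmt3_general (G : SimpleGraph V) (L S : Set V) (hS : S ⊆ L)
    (u : V) (hu : u ∈ S) :
    mwL G L Sᶜ ≤ mwL G L (Sᶜ ∪ {u}) := by
  have hsub : (Sᶜ ∪ {u}) \ {u} ⊆ Sᶜ := by rw [Set.sdiff_subset_iff, Set.union_comm]
  obtain ⟨M, hM, hMcard, hML⟩ := exists_ncard_eq_mwL G L (Sᶜ ∪ {u})
  obtain ⟨N, hN, hNcard⟩ := exists_card_eq_mmax G Sᶜ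
  have hN' : IsMatchingOn G (Sᶜ ∪ {u}) N := hN.mono Set.subset_union_left
  have hNM : N.card ≤ M.card := hMcard ▸ hN'.card_le_mmax
  rw [← hML]
  by_cases huM : u ∈ mcovered M
  · obtain ⟨v, huvM, -⟩ := hM.exists_adj huM
    rcases hM.exists_augment_or_shift hN' huM (hN.notMem_mcovered fun h => h hu) with
      ⟨P, hP, hPcard⟩ | ⟨P, z, hP, hPcard, hPcov⟩
    · -- `N` is one edge short of `M`, so deleting the edge at `u` from `M` is optimal
      have hNP : N.card + 1 ≤ M.card := hPcard ▸ hMcard ▸ hP.card_le_mmax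
      have hM₁ := (hM.erase_mk huvM).mono (Set.sdiff_subset.trans hsub)
      calc mwL G L Sᶜ ≤ (mcovered (M.erase s(u, v)) ∩ L).ncard :=
            hM₁.mwL_le (by have := Finset.card_erase_add_one huvM; omega)
        _ ≤ (mcovered M ∩ L).ncard :=
            Set.ncard_le_ncard (Set.inter_subset_inter_left _
              (mcovered_mono (Finset.erase_subset _ _))) (Set.toFinite _)
    · calc mwL G L Sᶜ ≤ (mcovered P ∩ L).ncard :=
            (hP.mono hsub).mwL_le (hNcard ▸ hPcard ▸ hNM)
        _ ≤ (mcovered M ∩ L).ncard :=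
          Set.ncard_inter_le_of_subset_insert hPcov huM (hS hu)
            (hP.notMem_mcovered (by simp)) (Set.toFinite _)
  · exact ((hM.diff_singleton huM).mono hsub).mwL_le (hNcard ▸ hMcard ▸ hNM)

/-- weak dominance: revealing an additional leader node `u ∈ S` never
decreases the minimum number of leader nodes covered in a maximum matching. -/
theorem stmt3 (G : SimpleGraph V) (L F S : Set V)
    (hpart : L ∪ F = Set.univ) (hdisj : Disjoint L F) (hS : S ⊆ L)
    (u : V) (hu : u ∈ S) :
    mwL G L Sᶜ ≤ mwL G L (Sᶜ ∪ {u}) :=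
  stmt3_general G L S hS u hu
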